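/- Fix α > 1, let σ₀ ∈ (0,1) satisfy α(1-σ₀) = e^{-σ₀}, and set θ = 1 - 1/α. Define F_γ(y) = (1 - α(1-y))/(1 - e^{-y}) for y > 0. Then F_γ(θ) ≥ 0, F_γ(σ₀) ≤ 1, and F_γ is monotonically increasing on [θ, σ₀]. -/

import Mathlib

open Real

theorem stmt_3 (α σ₀ θ : ℝ) (hα : 1 < α) (hσ₀ : σ₀ ∈ Set.Ioo (0 : ℝ) 1)
    (hroot : α * (1 - σ₀) = Real.exp (-σ₀)) (hθ : θ = 1 - 1 / α)
    (F : ℝ → ℝ) (hF : ∀ y, 0 < y → F y = (1 - α * (1 - y)) / (1 - Real.exp (-y))) :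
    0 ≤ F θ ∧ F σ₀ ≤ 1 ∧ MonotoneOn F (Set.Icc θ σ₀) := by
  obtain ⟨hσ0, hσ1⟩ := hσ₀
  have hα0 : (0:ℝ) < α := by linarith
  have hθpos : 0 < θ := by
    have h1 : 1 / α < 1 := by rw [div_lt_one hα0]; exact hα
    rw [hθ]; linarith
  set g : ℝ → ℝ := fun y => (1 - α * (1 - y)) / (1 - Real.exp (-y)) with hg
  have hne : ∀ x : ℝ, 0 < x → 1 - Real.exp (-x) ≠ 0 := by
    intro x hx
    have : Real.exp (-x) < 1 := by
      rw [Real.exp_lt_one_iff]; linarith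
    linarith
  have hden : ∀ x : ℝ, 0 < x → 0 < 1 - Real.exp (-x) := by
    intro x hx
    have : Real.exp (-x) < 1 := by
      rw [Real.exp_lt_one_iff]; linarith
    linarith
  -- F θ = 0
  have hFθ : F θ = 0 := by
    rw [hF θ hθpos]
    have : 1 - α * (1 - θ) = 0 := by
      rw [hθ]; field_simp; ring
    rw [this, zero_div]
  -- F σ₀ = 1
  have hFσ : F σ₀ = 1 := by
    rw [hF σ₀ hσ0]
    rw [← hroot]
    exact div_self (by rw [hroot]; exact hne σ₀ hσ0)
  refine ⟨by rw [hFθ], by rw [hFσ], ?_⟩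
  -- monotonicity
  have key : ∀ x : ℝ, 0 < x → HasDerivAt g
      ((α * (1 - Real.exp (-x)) - (1 - α * (1 - x)) * Real.exp (-x)) /
        (1 - Real.exp (-x))^2) x := by
    intro x hx
    have h1 : HasDerivAt (fun y : ℝ => 1 - α * (1 - y)) α x := by
      have := (((hasDerivAt_id x).const_sub 1).const_mul α).const_sub 1
      simpa using this
    have h2 : HasDerivAt (fun y : ℝ => 1 - Real.exp (-y)) (Real.exp (-x)) x := by
      have := ((hasDerivAt_neg x).exp).const_sub 1
      simpa using this
    exact h1.div h2 (hne x hx)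
  have hmono : StrictMonoOn g (Set.Icc θ σ₀) := by
    apply strictMonoOn_of_deriv_pos (convex_Icc θ σ₀)
    · apply ContinuousOn.div
      · fun_prop
      · fun_prop
      · intro x hx
        exact hne x (lt_of_lt_of_le hθpos hx.1)
    · intro x hx
      rw [interior_Icc] at hx
      have hx0 : 0 < x := lt_trans hθpos hx.1
      rw [(key x hx0).deriv]
      apply div_pos
      · have hE : x + 1 < Real.exp x := Real.add_one_lt_exp (ne_of_gt hx0)
        have hmul : Real.exp (-x) * Real.exp x = 1 := by
          rw [← Real.exp_add]; simp
        have hep : 0 < Real.exp (-x) := Real.exp_pos _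
        have hEp : 0 < Real.exp x := Real.exp_pos _
        nlinarith [mul_pos hα0 hx0, mul_pos hep hx0]
      · exact pow_pos (hden x hx0) 2
  intro a ha b hb hab
  rcases eq_or_lt_of_le hab with rfl | hlt
  · exact le_refl _
  · rw [hF a (lt_of_lt_of_le hθpos ha.1), hF b (lt_of_lt_of_le hθpos hb.1)]
    exact le_of_lt (hmono ha hb hlt)
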